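/- For all n₁, n₂ ∈ ℕ and all p, q ∈ [0,1], P(n₁, p, q) ≥ (1/2) · P(n₁ + n₂, p, q). -/

import Mathlib

/-!
Split the `n₁ + n₂` trials so that `X = X₁ + X₂` and `Y = Y₁ + Y₂`, where `X₁, Y₁` count
successes among the first `n₁` trials. Then `{Y ≥ X} ⊆ {Y₁ ≥ X₁} ∪ {Y₁ < X₁, Y ≥ X}`.
Since `max p q ≥ min p q`, the likelihood ratio is monotone: on `{X ≤ Y}`, exchanging
`(X₁, X₂)` with `(Y₁, Y₂)` does not decrease the weight of an outcome. The exchange sends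
the second event into `{X₁ < Y₁}`, so `Pr(Y ≥ X) ≤ 2 Pr(Y₁ ≥ X₁)`.
-/

open Real Filter

/-- Probability that a Binomial(m, p) random variable equals `k`. -/
noncomputable def binomProb (m : ℕ) (p : ℝ) (k : ℕ) : ℝ :=
  (m.choose k : ℝ) * p ^ k * (1 - p) ^ (m - k)

/-- For independent `X ~ Binomial(m, p)` and `Y ~ Binomial(n, q)`,
the probability `Pr(Y ≥ X - ℓ)`. -/
noncomputable def prGEshift (m : ℕ) (p : ℝ) (n : ℕ) (q : ℝ) (ℓ : ℝ) : ℝ :=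
  ∑ j ∈ Finset.range (m + 1), ∑ k ∈ Finset.range (n + 1),
    if (j : ℝ) - ℓ ≤ (k : ℝ) then binomProb m p j * binomProb n q k else 0

/-- For independent `X ~ Binomial(m, p)` and `Y ~ Binomial(n, q)`,
the probability `Pr(Y ≥ X)`. -/
noncomputable def prGE (m : ℕ) (p : ℝ) (n : ℕ) (q : ℝ) : ℝ :=
  prGEshift m p n q 0

/-- `P(m, n, p, q) = Pr(Y ≥ X)` for independent `X ~ Binomial(m, max p q)`
and `Y ~ Binomial(n, min p q)`. -/
noncomputable def Pmn (m n : ℕ) (p q : ℝ) : ℝ :=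
  prGE m (max p q) n (min p q)

/-- `P(n, p, q) = P(n, n, p, q)`. -/
noncomputable def Pn (n : ℕ) (p q : ℝ) : ℝ :=
  Pmn n n p q

open Finset

theorem sum_sum_ite_le_two_mul_of_swap {α β γ : Type*} [Preorder β] [DecidableLE β]
    [LinearOrder γ] (s : Finset α) (w : α → α → ℝ) (f : α → β) (g : α → γ)
    (hw0 : ∀ a ∈ s, ∀ b ∈ s, 0 ≤ w a b)
    (hw : ∀ a ∈ s, ∀ b ∈ s, f a ≤ f b → w a b ≤ w b a) :
    ∑ a ∈ s, ∑ b ∈ s, (if f a ≤ f b then w a b else 0)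
      ≤ 2 * ∑ a ∈ s, ∑ b ∈ s, (if g a ≤ g b then w a b else 0) := by
  have pointwise : ∀ a ∈ s, ∀ b ∈ s, (if f a ≤ f b then w a b else 0)
      ≤ (if g a ≤ g b then w a b else 0) + (if g b < g a ∧ f a ≤ f b then w b a else 0) := by
    intro a ha b hb
    by_cases hg : g a ≤ g b
    · have := hw0 a ha b hb
      simp only [hg, not_lt.2 hg, false_and, if_true, if_false, add_zero]
      split_ifs <;> linarith
    · by_cases hf : f a ≤ f b
      · simpa [hg, hf, lt_of_not_ge hg] using hw a ha b hb hf
      · simp [hg, hf]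
  have swapped : ∑ a ∈ s, ∑ b ∈ s, (if g b < g a ∧ f a ≤ f b then w b a else 0)
      ≤ ∑ a ∈ s, ∑ b ∈ s, (if g a ≤ g b then w a b else 0) := by
    rw [sum_comm]
    gcongr with a ha b hb
    by_cases h : g a < g b ∧ f b ≤ f a
    · simp [h, h.1.le]
    · simpa [h] using ite_nonneg (hw0 a ha b hb) le_rfl
  calc ∑ a ∈ s, ∑ b ∈ s, (if f a ≤ f b then w a b else 0)
      ≤ ∑ a ∈ s, ∑ b ∈ s, ((if g a ≤ g b then w a b else 0)
          + (if g b < g a ∧ f a ≤ f b then w b a else 0)) :=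
        sum_le_sum fun a ha => sum_le_sum fun b hb => pointwise a ha b hb
    _ ≤ 2 * ∑ a ∈ s, ∑ b ∈ s, (if g a ≤ g b then w a b else 0) := by
        simp only [sum_add_distrib]
        linarith

lemma binomProb_nonneg {p : ℝ} (h0 : 0 ≤ p) (h1 : p ≤ 1) (m k : ℕ) :
    0 ≤ binomProb m p k :=
  mul_nonneg (mul_nonneg (Nat.cast_nonneg _) (pow_nonneg h0 _)) (pow_nonneg (sub_nonneg.2 h1) _)

lemma binomProb_eq_zero_of_lt {m k : ℕ} (h : m < k) (p : ℝ) : binomProb m p k = 0 := by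
  simp [binomProb, Nat.choose_eq_zero_of_lt h]

lemma sum_range_binomProb (m : ℕ) (p : ℝ) : ∑ k ∈ range (m + 1), binomProb m p k = 1 :=
  calc ∑ k ∈ range (m + 1), binomProb m p k = (p + (1 - p)) ^ m := by
        rw [add_pow]; exact sum_congr rfl fun k _ => by simp only [binomProb]; ring
    _ = 1 := by simp

lemma binomProb_add (n₁ n₂ : ℕ) (p : ℝ) (j : ℕ) :
    binomProb (n₁ + n₂) p j
      = ∑ x ∈ antidiagonal j, binomProb n₁ p x.1 * binomProb n₂ p x.2 := by
  simp only [binomProb, Nat.add_choose_eq, Nat.cast_sum, Nat.cast_mul, sum_mul]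
  refine sum_congr rfl fun ⟨a, b⟩ hx => ?_
  obtain rfl : a + b = j := HasAntidiagonal.mem_antidiagonal.1 hx
  rcases lt_or_ge n₁ a with ha | ha
  · simp [Nat.choose_eq_zero_of_lt ha]
  rcases lt_or_ge n₂ b with hb | hb
  · simp [Nat.choose_eq_zero_of_lt hb]
  rw [show n₁ + n₂ - (a + b) = (n₁ - a) + (n₂ - b) by omega]
  ring

noncomputable def binomPairProb (n₁ n₂ : ℕ) (p : ℝ) (x : ℕ × ℕ) : ℝ :=
  binomProb n₁ p x.1 * binomProb n₂ p x.2

lemma binomPairProb_nonneg {p : ℝ} (h0 : 0 ≤ p) (h1 : p ≤ 1) (n₁ n₂ : ℕ) (x : ℕ × ℕ) :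
    0 ≤ binomPairProb n₁ n₂ p x :=
  mul_nonneg (binomProb_nonneg h0 h1 _ _) (binomProb_nonneg h0 h1 _ _)

lemma binomPairProb_eq {n₁ n₂ : ℕ} {x : ℕ × ℕ} (h₁ : x.1 ≤ n₁) (h₂ : x.2 ≤ n₂) (p : ℝ) :
    binomPairProb n₁ n₂ p x = (n₁.choose x.1 * n₂.choose x.2 : ℝ)
      * (p ^ (x.1 + x.2) * (1 - p) ^ (n₁ + n₂ - (x.1 + x.2))) := by
  rw [binomPairProb, binomProb, binomProb,
    show n₁ + n₂ - (x.1 + x.2) = (n₁ - x.1) + (n₂ - x.2) by omega]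
  ring

lemma binomProb_add_eq_sum_filter (n₁ n₂ : ℕ) (p : ℝ) (j : ℕ) :
    binomProb (n₁ + n₂) p j
      = ∑ x ∈ range (n₁ + 1) ×ˢ range (n₂ + 1) with x.1 + x.2 = j, binomPairProb n₁ n₂ p x := by
  rw [binomProb_add]
  refine (sum_subset (fun x hx => HasAntidiagonal.mem_antidiagonal.2 (mem_filter.1 hx).2)
    fun ⟨a, b⟩ hx hbox => ?_).symm
  simp only [mem_filter, mem_product, mem_range, HasAntidiagonal.mem_antidiagonal] at hx hbox
  rcases lt_or_ge n₁ a with ha | ha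
  · simp [binomProb_eq_zero_of_lt ha]
  · simp [binomProb_eq_zero_of_lt (show n₂ < b by omega)]

lemma sum_range_binomProb_add_mul (n₁ n₂ : ℕ) (p : ℝ) (g : ℕ → ℝ) :
    ∑ j ∈ range (n₁ + n₂ + 1), binomProb (n₁ + n₂) p j * g j
      = ∑ x ∈ range (n₁ + 1) ×ˢ range (n₂ + 1), binomPairProb n₁ n₂ p x * g (x.1 + x.2) := by
  rw [← sum_fiberwise_of_maps_to (t := range (n₁ + n₂ + 1)) (g := fun x : ℕ × ℕ => x.1 + x.2)]
  · refine sum_congr rfl fun j _ => ?_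
    rw [binomProb_add_eq_sum_filter, sum_mul]
    exact sum_congr rfl fun x hx => by rw [(mem_filter.1 hx).2]
  · intro x hx
    simp only [mem_product, mem_range] at hx ⊢
    omega

lemma pow_mul_one_sub_pow_swap_le {P Q : ℝ} (hQ0 : 0 ≤ Q) (hQP : Q ≤ P) (hP1 : P ≤ 1)
    {a b n : ℕ} (hab : a ≤ b) (hbn : b ≤ n) :
    P ^ a * (1 - P) ^ (n - a) * (Q ^ b * (1 - Q) ^ (n - b))
      ≤ P ^ b * (1 - P) ^ (n - b) * (Q ^ a * (1 - Q) ^ (n - a)) := by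
  obtain ⟨d, rfl⟩ := Nat.exists_eq_add_of_le hab
  set c := P ^ a * Q ^ a * (1 - P) ^ (n - (a + d)) * (1 - Q) ^ (n - (a + d)) with hc_def
  have hc : 0 ≤ c := by
    have := hQ0.trans hQP; have := sub_nonneg.2 hP1; have := sub_nonneg.2 (hQP.trans hP1)
    positivity
  have hratio : Q ^ d * (1 - P) ^ d ≤ P ^ d * (1 - Q) ^ d := by
    simpa only [mul_pow] using pow_le_pow_left₀ (mul_nonneg hQ0 (sub_nonneg.2 hP1))
      (by nlinarith : Q * (1 - P) ≤ P * (1 - Q)) d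
  rw [show n - a = n - (a + d) + d by omega]
  calc P ^ a * (1 - P) ^ (n - (a + d) + d) * (Q ^ (a + d) * (1 - Q) ^ (n - (a + d)))
      = c * (Q ^ d * (1 - P) ^ d) := by rw [hc_def]; ring
    _ ≤ c * (P ^ d * (1 - Q) ^ d) := mul_le_mul_of_nonneg_left hratio hc
    _ = P ^ (a + d) * (1 - P) ^ (n - (a + d)) * (Q ^ a * (1 - Q) ^ (n - (a + d) + d)) := by
        rw [hc_def]; ring

lemma binomPairProb_mul_le_swap {P Q : ℝ} (hQ0 : 0 ≤ Q) (hQP : Q ≤ P) (hP1 : P ≤ 1)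
    {n₁ n₂ : ℕ} {a b : ℕ × ℕ} (ha : a ∈ range (n₁ + 1) ×ˢ range (n₂ + 1))
    (hb : b ∈ range (n₁ + 1) ×ˢ range (n₂ + 1)) (hab : a.1 + a.2 ≤ b.1 + b.2) :
    binomPairProb n₁ n₂ P a * binomPairProb n₁ n₂ Q b
      ≤ binomPairProb n₁ n₂ P b * binomPairProb n₁ n₂ Q a := by
  simp only [mem_product, mem_range, Nat.lt_succ_iff] at ha hb
  simp only [binomPairProb_eq ha.1 ha.2, binomPairProb_eq hb.1 hb.2]
  have hpow := pow_mul_one_sub_pow_swap_le hQ0 hQP hP1 hab (n := n₁ + n₂) (by omega)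
  have hC : (0 : ℝ) ≤ n₁.choose a.1 * n₂.choose a.2 * (n₁.choose b.1 * n₂.choose b.2) := by
    positivity
  calc _ = (n₁.choose a.1 * n₂.choose a.2 * (n₁.choose b.1 * n₂.choose b.2) : ℝ)
        * (P ^ (a.1 + a.2) * (1 - P) ^ (n₁ + n₂ - (a.1 + a.2))
          * (Q ^ (b.1 + b.2) * (1 - Q) ^ (n₁ + n₂ - (b.1 + b.2)))) := by ring
    _ ≤ _ := mul_le_mul_of_nonneg_left hpow hC
    _ = _ := by ring

lemma prGE_eq_sum_ite (m n : ℕ) (p q : ℝ) :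
    prGE m p n q = ∑ j ∈ range (m + 1), ∑ k ∈ range (n + 1),
      if j ≤ k then binomProb m p j * binomProb n q k else 0 := by
  simp [prGE, prGEshift]

lemma prGE_add_eq_sum_pairs (n₁ n₂ : ℕ) (p q : ℝ) :
    prGE (n₁ + n₂) p (n₁ + n₂) q
      = ∑ a ∈ range (n₁ + 1) ×ˢ range (n₂ + 1), ∑ b ∈ range (n₁ + 1) ×ˢ range (n₂ + 1),
          if a.1 + a.2 ≤ b.1 + b.2 then binomPairProb n₁ n₂ p a * binomPairProb n₁ n₂ q b
          else 0 := by
  have factor : ∀ j k : ℕ,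
      (if j ≤ k then binomProb (n₁ + n₂) p j * binomProb (n₁ + n₂) q k else 0)
        = binomProb (n₁ + n₂) p j * (binomProb (n₁ + n₂) q k * if j ≤ k then 1 else 0) := by
    intro j k
    split_ifs <;> ring
  simp_rw [prGE_eq_sum_ite, factor, ← mul_sum, sum_range_binomProb_add_mul, mul_sum, mul_ite,
    mul_one, mul_zero]

lemma sum_pairs_fst_eq_prGE (n₁ n₂ : ℕ) (p q : ℝ) :
    ∑ a ∈ range (n₁ + 1) ×ˢ range (n₂ + 1), ∑ b ∈ range (n₁ + 1) ×ˢ range (n₂ + 1),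
        (if a.1 ≤ b.1 then binomPairProb n₁ n₂ p a * binomPairProb n₁ n₂ q b else 0)
      = prGE n₁ p n₁ q := by
  have factor : ∀ a b : ℕ × ℕ,
      (if a.1 ≤ b.1 then binomPairProb n₁ n₂ p a * binomPairProb n₁ n₂ q b else 0)
        = (if a.1 ≤ b.1 then binomProb n₁ p a.1 * binomProb n₁ q b.1 else 0)
          * binomProb n₂ p a.2 * binomProb n₂ q b.2 := by
    intro a b
    unfold binomPairProb
    split_ifs <;> ring
  simp_rw [factor, prGE_eq_sum_ite, sum_product]
  simp only [← mul_sum, ← sum_mul, sum_range_binomProb, mul_one]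

theorem P_half_monotone
    (n₁ n₂ : ℕ) (p q : ℝ) (hp0 : 0 ≤ p) (hp1 : p ≤ 1) (hq0 : 0 ≤ q) (hq1 : q ≤ 1) :
    (1 / 2) * Pn (n₁ + n₂) p q ≤ Pn n₁ p q := by
  have hQ0 : 0 ≤ min p q := le_min hp0 hq0
  have hQP : min p q ≤ max p q := min_le_max
  have hP1 : max p q ≤ 1 := max_le hp1 hq1
  have key := sum_sum_ite_le_two_mul_of_swap (range (n₁ + 1) ×ˢ range (n₂ + 1))
    (fun a b => binomPairProb n₁ n₂ (max p q) a * binomPairProb n₁ n₂ (min p q) b)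
    (fun x => x.1 + x.2) Prod.fst
    (fun _ _ _ _ => mul_nonneg (binomPairProb_nonneg (hQ0.trans hQP) hP1 _ _ _)
      (binomPairProb_nonneg hQ0 (hQP.trans hP1) _ _ _))
    (fun _ ha _ hb => binomPairProb_mul_le_swap hQ0 hQP hP1 ha hb)
  rw [← prGE_add_eq_sum_pairs, sum_pairs_fst_eq_prGE] at key
  rw [Pn, Pn, Pmn, Pmn]
  linarith
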